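/- arXiv:2301.12182 — 2 statements merged into one kernel-verified Lean document; each statement's English description precedes it below -/
import Mathlib

section
/- Let d ∈ ℕ, let z = w(d), and let P(d) := P^z + [0, 2e_{d(z)+1}] + ... + [0, 2e_d] ⊆ ℝ^d, where P^z (of dimension d(z) = φ(z)/2 + h(z)) is embedded into ℝ^{d(z)} × {0}^{d−d(z)}. Then every interior lattice point w ∈ int(P(d)) ∩ ℤ^d satisfies ca(P(d), w) = w(d) − 1. In particular, the bound ca ≤ w(d) − 1 for deep interior lattice points of lattice parallelepipeds is best possible. -/
/-!
Writing a point of the parallelepiped as `∑ t_j g_j` identifies `P(d)` with the image of the unit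
cube under a linear automorphism `T`, and the coefficient of asymmetry is invariant under `T`;
so `ca(P(d), w) = ca([0,1]^d, τ)` with `w = T τ`. For the cube, `λ` is admissible iff
`1 - τ_j ≤ λ τ_j` and `τ_j ≤ λ (1 - τ_j)` for every `j`, hence the value is `z - 1` as soon as all
`τ_j` lie in `[1/z, 1 - 1/z]` and one of them is an endpoint.

For a lattice point `w` with `w_0 = m` we get `τ_0 = m/z`, `τ_j = (w_j z - m v_j)/z` along the
unit generators and `τ_j = 1/2` along the generators `2 e_j`; as all `τ_j ∈ (0, 1)`, they lie in
`[1/z, 1 - 1/z]`. The coordinates with `v_j = z/p` show that `p ∤ m` for every prime `p ∣ z`, so `m`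
is invertible mod `z` and `m b ≡ ±1 (mod z)` for some `1 ≤ b ≤ z/2` coprime to `z`. Such a `b` is
`1` or one of the `v_j`, and the corresponding coordinate is `1/z` or `1 - 1/z`.
-/

open Pointwise

/-- The coefficient of asymmetry of a point `w` in a convex set `K`:
`ca(K,w) = min{λ ≥ 1 : w − K ⊆ λ(K − w)}`. -/
noncomputable def ca {E : Type*} [AddCommGroup E] [Module ℝ E] (K : Set E) (w : E) : ℝ :=
  sInf {l : ℝ | 1 ≤ l ∧ ({w} : Set E) - K ⊆ l • (K - {w})}

/-- A point of `ℝ^d` all of whose coordinates are integers. -/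
def IsLatticePoint {d : ℕ} (x : Fin d → ℝ) : Prop := ∀ i, ∃ z : ℤ, x i = (z : ℝ)

/-- `h(z)` is `0` if `z` is prime, and otherwise the number of distinct prime divisors. -/
def hComposite (z : ℕ) : ℕ := if z.Prime then 0 else z.primeFactors.card

/-- `w(d) = max{z ∈ ℕ : φ(z)/2 + h(z) ≤ d}`. -/
noncomputable def wLR (d : ℕ) : ℕ :=
  sSup {z : ℕ | (z.totient : ℚ) / 2 + (hComposite z : ℚ) ≤ (d : ℚ)}

open Set

theorem ca_image_linearEquiv {E F : Type*} [AddCommGroup E] [Module ℝ E] [AddCommGroup F]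
    [Module ℝ F] (T : E ≃ₗ[ℝ] F) (K : Set E) (x : E) : ca (T '' K) (T x) = ca K x := by
  simp only [ca, ← image_singleton, ← image_sub, ← image_smul_set,
    image_subset_image_iff T.injective]

theorem singleton_sub_Icc_subset_smul_iff {ι : Type*} (τ : ι → ℝ) {l : ℝ} (hl : 0 < l) :
    ({τ} : Set (ι → ℝ)) - Icc 0 1 ⊆ l • (Icc 0 1 - {τ}) ↔
      ∀ j, 1 - τ j ≤ l * τ j ∧ τ j ≤ l * (1 - τ j) := by
  have hsmul : l • Icc (0 - τ) (1 - τ) = Icc (l • (0 - τ)) (l • (1 - τ)) :=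
    (OrderIso.smulRight (β := ι → ℝ) hl).image_Icc _ _
  rw [singleton_sub, image_const_sub_Icc, sub_singleton, image_sub_const_Icc, hsmul,
    Icc_subset_Icc_iff (by simp), Pi.le_def, Pi.le_def, ← forall_and]
  refine forall_congr' fun j => and_congr ?_ ?_
  · simp only [Pi.smul_apply, Pi.sub_apply, Pi.zero_apply, Pi.one_apply, smul_eq_mul]
    constructor <;> intro <;> linarith
  · simp

theorem ca_Icc_eq {ι : Type*} {Z : ℝ} (hZ : 2 ≤ Z) {τ : ι → ℝ}
    (hτ : ∀ j, τ j ∈ Icc (1 / Z) (1 - 1 / Z)) (hwit : ∃ j, τ j = 1 / Z ∨ τ j = 1 - 1 / Z) :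
    ca (Icc 0 1) τ = Z - 1 := by
  suffices {l : ℝ | 1 ≤ l ∧ ({τ} : Set (ι → ℝ)) - Icc 0 1 ⊆ l • (Icc 0 1 - {τ})} = Ici (Z - 1) by
    rw [ca, this, csInf_Ici]
  have hZ0 : 0 < Z := by linarith
  ext l
  refine ⟨fun ⟨hl, hsub⟩ => ?_, fun (hl : Z - 1 ≤ l) => ⟨by linarith, ?_⟩⟩
  · obtain ⟨j, hj⟩ := hwit
    have hj' := (singleton_sub_Icc_subset_smul_iff τ (by linarith)).1 hsub j
    -- at either extreme value the binding inequality reads `1 - 1/Z ≤ l/Z`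
    have key : 1 - 1 / Z ≤ l * (1 / Z) := by
      rcases hj with hj | hj <;> rw [hj] at hj'
      · exact hj'.1
      · simpa using hj'.2
    rw [mem_Ici]
    field_simp at key
    linarith
  · refine (singleton_sub_Icc_subset_smul_iff τ (by linarith)).2 fun j => ?_
    obtain ⟨h1, h2⟩ := hτ j
    rw [div_le_iff₀ hZ0] at h1
    rw [le_sub_iff_add_le, ← le_sub_iff_add_le', div_le_iff₀ hZ0] at h2
    constructor <;> nlinarith

section Parallelepiped

variable {ι : Type*} [Fintype ι] [DecidableEq ι] {g : ι → ι → ℝ} {i0 : ι} {v c : ι → ℝ}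

theorem sum_smul_update_single_apply
    (hg : g = Function.update (fun j => Pi.single j (c j)) i0 v) (t : ι → ℝ) (i : ι) :
    (∑ j, t j • g j) i = t i0 * v i + if i = i0 then 0 else c i * t i := by
  have hrest : ∀ j ∈ ({i0}ᶜ : Finset ι), (t j • g j) i = if i = j then c i * t i else 0 := by
    intro j hj
    rw [hg, Function.update_of_ne (by simpa using hj), Pi.smul_apply, Pi.single_apply]
    split_ifs with h
    · rw [h, smul_eq_mul, mul_comm]
    · rw [smul_zero]
  rw [Finset.sum_apply, Fintype.sum_eq_add_sum_compl i0, Finset.sum_congr rfl hrest,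
    Finset.sum_ite_eq]
  simp [hg, eq_comm]

theorem exists_linearEquiv_parallelepiped_eq_image
    (hg : g = Function.update (fun j => Pi.single j (c j)) i0 v) (hv : v i0 ≠ 0)
    (hc : ∀ j ≠ i0, c j ≠ 0) :
    ∃ T : (ι → ℝ) ≃ₗ[ℝ] (ι → ℝ), parallelepiped g = T '' Icc 0 1 ∧
      ∀ t i, T t i = t i0 * v i + if i = i0 then 0 else c i * t i := by
  have hinj : Function.Injective (Fintype.linearCombination ℝ g) := by
    refine (injective_iff_map_eq_zero _).2 fun t ht => ?_
    have hcoord i := congrFun ht i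
    simp only [Fintype.linearCombination_apply, sum_smul_update_single_apply hg,
      Pi.zero_apply] at hcoord
    have h0 : t i0 = 0 := by simpa [hv] using hcoord i0
    funext i
    by_cases hi : i = i0
    · rw [hi, h0]; rfl
    · simpa [hi, h0, hc i hi] using hcoord i
  refine ⟨.ofInjectiveEndo _ hinj, rfl, fun t i => ?_⟩
  exact sum_smul_update_single_apply hg t i

end Parallelepiped

theorem interior_image_Icc_zero_one {ι : Type*} [Fintype ι] (T : (ι → ℝ) ≃ₗ[ℝ] (ι → ℝ)) :
    interior (T '' Icc 0 1) = T '' pi univ fun _ => Ioo 0 1 := by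
  have hcube : interior (Icc (0 : ι → ℝ) 1) = pi univ fun _ => Ioo 0 1 := by
    rw [← pi_univ_Icc, interior_pi_set finite_univ]
    simp
  rw [← hcube]
  exact (T.toContinuousLinearEquiv.toHomeomorph.image_interior _).symm

theorem Int.isCoprime_of_forall_not_dvd_mul_div {z : ℕ} (hz : z ≠ 0) {m : ℤ}
    (h : ∀ q ∈ z.primeFactors, ¬ (z : ℤ) ∣ m * (z / q : ℕ)) : IsCoprime m z := by
  rw [Int.isCoprime_iff_gcd_eq_one]
  by_contra hne
  obtain ⟨q, hq, hqg⟩ := Nat.exists_prime_and_dvd hne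
  have hqz : q ∣ z := hqg.trans (Int.natCast_dvd_natCast.1 (Int.gcd_dvd_right m z))
  obtain ⟨r, rfl⟩ := (Int.natCast_dvd_natCast.2 hqg).trans (Int.gcd_dvd_left m z)
  refine h q (Nat.mem_primeFactors.2 ⟨hq, hqz, hz⟩) ⟨r, ?_⟩
  rw [mul_comm (q : ℤ), mul_assoc, ← Nat.cast_mul, Nat.mul_div_cancel' hqz, mul_comm]

theorem Int.isCoprime_of_mul_modEq_one {z m b : ℤ} (h : m * b ≡ 1 [ZMOD z]) : IsCoprime b z := by
  obtain ⟨c, hc⟩ := h.dvd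
  exact ⟨m, c, by linear_combination -hc⟩

theorem Int.exists_mul_modEq_one_or_neg_one {z : ℕ} (hz : 2 ≤ z) {m : ℤ} (hm : IsCoprime m z) :
    ∃ b : ℕ, 1 ≤ b ∧ 2 * b ≤ z ∧ b.Coprime z ∧ (m * b ≡ 1 [ZMOD z] ∨ m * b ≡ -1 [ZMOD z]) := by
  obtain ⟨u, s, hus⟩ := hm
  have hz0 : (0 : ℤ) < z := by omega
  set r := u % z
  have hr : m * r ≡ 1 [ZMOD z] :=
    calc m * r ≡ m * u [ZMOD z] := (Int.mod_modEq u z).mul_left m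
      _ ≡ 1 [ZMOD z] := Int.modEq_iff_dvd.2 ⟨s, by linear_combination -hus⟩
  have hr0 : r ≠ 0 := by
    rintro hr0
    rw [hr0, mul_zero] at hr
    have := Int.le_of_dvd one_pos (by simpa using hr.dvd)
    omega
  have hrz : r < z := Int.emod_lt_of_pos u hz0
  have hr0' : 0 ≤ r := Int.emod_nonneg u hz0.ne'
  obtain ⟨b, hb0, hbz, hb⟩ : ∃ b : ℤ, 0 < b ∧ 2 * b ≤ z ∧
      (m * b ≡ 1 [ZMOD z] ∨ m * b ≡ -1 [ZMOD z]) := by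
    by_cases hr2 : 2 * r ≤ z
    · exact ⟨r, by omega, hr2, Or.inl hr⟩
    · obtain ⟨c, hc⟩ := hr.dvd
      refine ⟨z - r, by omega, by omega, Or.inr (Int.modEq_iff_dvd.2 ⟨-c - m, ?_⟩)⟩
      linear_combination -hc
  lift b to ℕ using hb0.le
  refine ⟨b, by omega, by omega, Nat.isCoprime_iff_coprime.1 ?_, hb⟩
  rcases hb with hb | hb
  · exact Int.isCoprime_of_mul_modEq_one hb
  · exact Int.isCoprime_of_mul_modEq_one (m := -m) (by simpa using hb.neg)

theorem intCast_div_mem_Ioo_iff {z : ℕ} (hz : 0 < z) {n : ℤ} :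
    (n : ℝ) / z ∈ Ioo 0 1 ↔ 0 < n ∧ n < z := by
  have hz' : (0 : ℝ) < z := by exact_mod_cast hz
  rw [mem_Ioo, div_pos_iff_of_pos_right hz', div_lt_one hz']
  norm_cast

theorem intCast_div_mem_Icc {z : ℕ} {n : ℤ} (h : (n : ℝ) / z ∈ Ioo 0 1) :
    (n : ℝ) / z ∈ Icc (1 / (z : ℝ)) (1 - 1 / z) := by
  have hz0 : 0 < z := by
    rcases Nat.eq_zero_or_pos z with rfl | hz0
    · simp at h
    · exact hz0
  obtain ⟨h0, hn⟩ := (intCast_div_mem_Ioo_iff hz0).1 h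
  have hz : (0 : ℝ) < z := by exact_mod_cast h0.trans hn
  have h1 : (1 : ℝ) ≤ n := by exact_mod_cast h0
  have h2 : (n : ℝ) ≤ z - 1 := by
    have : n ≤ (z : ℤ) - 1 := by omega
    exact_mod_cast this
  refine ⟨by gcongr, ?_⟩
  rw [one_sub_div hz.ne']
  gcongr

theorem intCast_div_eq_one_div_or_one_sub {z : ℕ} {n : ℤ} (hz0 : 0 < z)
    (hn : (n : ℝ) / z ∈ Ioo 0 1) (h : n ≡ 1 [ZMOD z] ∨ n ≡ -1 [ZMOD z]) :
    (n : ℝ) / z = 1 / z ∨ (n : ℝ) / z = 1 - 1 / z := by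
  obtain ⟨h0, hn⟩ := (intCast_div_mem_Ioo_iff hz0).1 hn
  have hz : (z : ℝ) ≠ 0 := by exact_mod_cast hz0.ne'
  rcases h with h | h
  · have : 1 - n = 0 := Int.eq_zero_of_abs_lt_dvd h.dvd (by rw [abs_lt]; omega)
    left
    rw [show n = 1 by omega, Int.cast_one]
  · have : -1 - n + z = 0 :=
      Int.eq_zero_of_abs_lt_dvd (h.dvd.add dvd_rfl) (by rw [abs_lt]; omega)
    right
    rw [one_sub_div hz, show n = z - 1 by omega]
    push_cast
    rfl

theorem eq_one_half_of_intCast_eq_two_mul {x : ℝ} {n : ℤ} (hx : x ∈ Ioo 0 1)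
    (hn : (n : ℝ) = 2 * x) : x = 1 / 2 := by
  have h0 : (0 : ℝ) < n := by rw [hn]; linarith [hx.1]
  have h2 : (n : ℝ) < 2 := by rw [hn]; linarith [hx.2]
  have : n = 1 := by
    have : 0 < n := by exact_mod_cast h0
    have : n < 2 := by exact_mod_cast h2
    omega
  rw [this, Int.cast_one] at hn
  linarith

theorem one_half_mem_Icc {z : ℕ} (hz : 2 ≤ z) : (1 / 2 : ℝ) ∈ Icc (1 / (z : ℝ)) (1 - 1 / z) := by
  have hz' : (2 : ℝ) ≤ z := by exact_mod_cast hz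
  refine ⟨by gcongr, ?_⟩
  rw [one_sub_div (by positivity), div_le_div_iff₀ (by norm_num) (by positivity)]
  linarith

section LatticePoint

variable {ι : Type*} [DecidableEq ι] {z : ℕ} {i0 : ι} {v : ι → ℕ} {c τ : ι → ℝ} {W : ι → ℤ}

theorem coord_eq_intCast_div_of_ne (hz : z ≠ 0) (hv0 : v i0 = z)
    (hW : ∀ j, (W j : ℝ) = τ i0 * v j + if j = i0 then 0 else c j * τ j) {j : ι} (hj : j ≠ i0)
    (hcj : c j = 1) : τ j = ((W j * z - W i0 * v j : ℤ) : ℝ) / z := by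
  have hz' : (z : ℝ) ≠ 0 := by exact_mod_cast hz
  have h0 := hW i0
  have hj' := hW j
  rw [if_pos rfl, hv0, add_zero] at h0
  rw [if_neg hj, hcj, one_mul] at hj'
  rw [eq_div_iff hz']
  push_cast
  linear_combination -(z : ℝ) * hj' + (v j : ℝ) * h0

theorem coord_eq_intCast_div (hz : z ≠ 0) (hv0 : v i0 = z)
    (hW : ∀ j, (W j : ℝ) = τ i0 * v j + if j = i0 then 0 else c j * τ j) :
    τ i0 = (W i0 : ℝ) / z := by
  have hz' : (z : ℝ) ≠ 0 := by exact_mod_cast hz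
  rw [hW i0, if_pos rfl, hv0, add_zero, mul_div_cancel_right₀ _ hz']

theorem coord_mem_Icc (hz : 2 ≤ z) (hv0 : v i0 = z)
    (hc : ∀ j ≠ i0, c j = 1 ∨ (c j = 2 ∧ v j = 0)) (hτ : ∀ j, τ j ∈ Ioo 0 1)
    (hW : ∀ j, (W j : ℝ) = τ i0 * v j + if j = i0 then 0 else c j * τ j) (j : ι) :
    τ j ∈ Icc (1 / (z : ℝ)) (1 - 1 / z) := by
  have hz0 : z ≠ 0 := by omega
  by_cases hj : j = i0
  · subst hj
    have h := hτ j
    rw [coord_eq_intCast_div hz0 hv0 hW] at h ⊢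
    exact intCast_div_mem_Icc h
  rcases hc j hj with hcj | ⟨hcj, hvj⟩
  · have h := hτ j
    rw [coord_eq_intCast_div_of_ne hz0 hv0 hW hj hcj] at h ⊢
    exact intCast_div_mem_Icc h
  · have hWj := hW j
    rw [if_neg hj, hcj, hvj, Nat.cast_zero, mul_zero, zero_add] at hWj
    rw [eq_one_half_of_intCast_eq_two_mul (hτ j) hWj]
    exact one_half_mem_Icc hz

theorem isCoprime_coord (hz : 2 ≤ z) (hv0 : v i0 = z)
    (hprime : ∀ q ∈ z.primeFactors, ∃ j ≠ i0, c j = 1 ∧ v j = z / q) (hτ : ∀ j, τ j ∈ Ioo 0 1)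
    (hW : ∀ j, (W j : ℝ) = τ i0 * v j + if j = i0 then 0 else c j * τ j) :
    IsCoprime (W i0) z := by
  refine Int.isCoprime_of_forall_not_dvd_mul_div (by omega) fun q hq hdvd => ?_
  obtain ⟨j, hj, hcj, hvj⟩ := hprime q hq
  have h := hτ j
  rw [coord_eq_intCast_div_of_ne (by omega) hv0 hW hj hcj, hvj,
    intCast_div_mem_Ioo_iff (by omega)] at h
  have := Int.le_of_dvd h.1 (dvd_sub (dvd_mul_left _ _) hdvd)
  omega

theorem exists_coord_eq_one_div_or_one_sub (hz : 2 ≤ z) (hv0 : v i0 = z)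
    (hcop : ∀ b : ℕ, 1 < b → 2 * b ≤ z → b.Coprime z → ∃ j ≠ i0, c j = 1 ∧ v j = b)
    (hm : IsCoprime (W i0) z) (hτ : ∀ j, τ j ∈ Ioo 0 1)
    (hW : ∀ j, (W j : ℝ) = τ i0 * v j + if j = i0 then 0 else c j * τ j) :
    ∃ j, τ j = 1 / z ∨ τ j = 1 - 1 / z := by
  obtain ⟨b, hb1, hb2, hbz, hb⟩ := Int.exists_mul_modEq_one_or_neg_one hz hm
  rcases hb1.eq_or_lt with rfl | hb1
  · refine ⟨i0, ?_⟩
    have h := hτ i0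
    rw [coord_eq_intCast_div (by omega) hv0 hW] at h ⊢
    exact intCast_div_eq_one_div_or_one_sub (by omega) h (by simpa using hb)
  · obtain ⟨j, hj, hcj, hvj⟩ := hcop b hb1 hb2 hbz
    have hτj := coord_eq_intCast_div_of_ne (by omega) hv0 hW hj hcj
    rw [hvj] at hτj
    have h := hτ j
    rw [hτj] at h
    refine ⟨j, hτj ▸ intCast_div_eq_one_div_or_one_sub (by omega) h ?_⟩
    have hN : W j * z - W i0 * b ≡ -(W i0 * b) [ZMOD z] :=
      Int.modEq_iff_dvd.2 ⟨-W j, by ring⟩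
    rcases hb with hb | hb
    · exact Or.inr (hN.trans hb.neg)
    · exact Or.inl (by simpa using hN.trans hb.neg)

theorem ca_Icc_of_lattice_image (hz : 2 ≤ z) (hv0 : v i0 = z)
    (hc : ∀ j ≠ i0, c j = 1 ∨ (c j = 2 ∧ v j = 0))
    (hcop : ∀ b : ℕ, 1 < b → 2 * b ≤ z → b.Coprime z → ∃ j ≠ i0, c j = 1 ∧ v j = b)
    (hprime : ∀ q ∈ z.primeFactors, ∃ j ≠ i0, c j = 1 ∧ v j = z / q) (hτ : ∀ j, τ j ∈ Ioo 0 1)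
    (hW : ∀ j, (W j : ℝ) = τ i0 * v j + if j = i0 then 0 else c j * τ j) :
    ca (Icc 0 1) τ = z - 1 :=
  ca_Icc_eq (by exact_mod_cast hz) (coord_mem_Icc hz hv0 hc hτ hW)
    (exists_coord_eq_one_div_or_one_sub hz hv0 hcop (isCoprime_coord hz hv0 hprime hτ hW) hτ hW)

end LatticePoint

section Generators

variable {d z k h : ℕ} {v : Fin d → ℕ} {g : Fin d → Fin d → ℝ}

theorem two_le_of_generators (hd : 1 ≤ d) (hk : 2 * k = z.totient) (hh : h = hComposite z)
    (hv0 : ∀ i : Fin d, (i : ℕ) = 0 → v i = z)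
    (hg0 : ∀ j : Fin d, (j : ℕ) = 0 → g j = fun i => (v i : ℝ))
    (hg2 : ∀ j : Fin d, k + h ≤ (j : ℕ) → g j = Pi.single j 2) : 2 ≤ z := by
  by_contra! hz
  interval_cases z
  · -- for `z = 0` the first generator would be both `v = 0` and `2 e₀`
    have hkh : k + h = 0 := by simp_all [hComposite]
    have h0 := congrFun ((hg0 ⟨0, hd⟩ rfl).symm.trans (hg2 ⟨0, hd⟩ (by simp [hkh]))) ⟨0, hd⟩
    simp [hv0] at h0
  · simp at hk

theorem generators_eq_update (hd : 1 ≤ d)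
    (hg0 : ∀ j : Fin d, (j : ℕ) = 0 → g j = fun i => (v i : ℝ))
    (hg1 : ∀ j : Fin d, (j : ℕ) ≠ 0 → (j : ℕ) < k + h → g j = Pi.single j 1)
    (hg2 : ∀ j : Fin d, k + h ≤ (j : ℕ) → g j = Pi.single j 2) :
    g = Function.update (fun j : Fin d => Pi.single j (if (j : ℕ) < k + h then (1 : ℝ) else 2))
      ⟨0, hd⟩ (fun i => (v i : ℝ)) := by
  funext j
  by_cases hj : j = ⟨0, hd⟩
  · rw [hj, Function.update_self, hg0 _ rfl]
  rw [Function.update_of_ne hj]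
  have hj' : (j : ℕ) ≠ 0 := fun h0 => hj (Fin.ext h0)
  by_cases hjk : (j : ℕ) < k + h
  · rw [if_pos hjk, hg1 j hj' hjk]
  · rw [if_neg hjk, hg2 j (by omega)]

theorem exists_index_of_coprime (hkd : k ≤ d) {a : Fin k → ℕ} (ha : StrictMono a)
    (haran : ∀ b : ℕ, (∃ i, a i = b) ↔ 1 ≤ b ∧ 2 * b ≤ z ∧ Nat.gcd b z = 1)
    (hva : ∀ i : Fin d, ∀ hik : (i : ℕ) < k, (i : ℕ) ≠ 0 → v i = a ⟨(i : ℕ), hik⟩)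
    {b : ℕ} (hb1 : 1 < b) (hb2 : 2 * b ≤ z) (hbz : b.Coprime z) :
    ∃ j : Fin d, (j : ℕ) ≠ 0 ∧ (j : ℕ) < k ∧ v j = b := by
  obtain ⟨i, rfl⟩ := (haran b).2 ⟨hb1.le, hb2, hbz⟩
  obtain ⟨i1, hi1⟩ := (haran 1).2 ⟨le_rfl, by omega, Nat.gcd_one_left z⟩
  -- `a` is increasing and takes the value `1`, so `a 0 = 1 < b`
  have hi : (i : ℕ) ≠ 0 := fun h0 =>
    (ha.monotone (Fin.le_def.2 (h0 ▸ Nat.zero_le _) : i ≤ i1)).not_gt (hi1 ▸ hb1)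
  exact ⟨⟨i, i.2.trans_le hkd⟩, hi, i.2, hva ⟨i, _⟩ i.2 hi⟩

theorem exists_index_of_mem_primeFactors (hD : k + h ≤ d) {p : Fin h → ℕ}
    (hpran : ∀ q : ℕ, (∃ j, p j = q) ↔ q ∈ z.primeFactors)
    (hvp : ∀ i : Fin d, ∀ hik : (i : ℕ) < k + h, ∀ hki : k ≤ (i : ℕ),
      v i = z / p ⟨(i : ℕ) - k, by omega⟩)
    {q : ℕ} (hq : q ∈ z.primeFactors) :
    ∃ j : Fin d, k ≤ (j : ℕ) ∧ (j : ℕ) < k + h ∧ v j = z / q := by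
  obtain ⟨i, rfl⟩ := (hpran q).2 hq
  refine ⟨⟨k + i, by omega⟩, by simp, by simp, ?_⟩
  rw [hvp _ (by simp) (by simp)]
  simp

end Generators

theorem extremal_lattice_parallelepipeds (d : ℕ) (hd : 1 ≤ d)
    (z : ℕ) (hz : z = wLR d)
    (k : ℕ) (hk : 2 * k = z.totient)
    (h : ℕ) (hh : h = hComposite z)
    (hD : k + h ≤ d)
    (a : Fin k → ℕ) (ha : StrictMono a)
    (haran : ∀ b : ℕ, (∃ i, a i = b) ↔ 1 ≤ b ∧ 2 * b ≤ z ∧ Nat.gcd b z = 1)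
    (p : Fin h → ℕ)
    (hpran : ∀ q : ℕ, (∃ j, p j = q) ↔ q ∈ z.primeFactors)
    -- the generator `v^z = (z, a_2, …, a_k, z/p_1, …, z/p_h)`, embedded into `ℝ^d` by zeros
    (v : Fin d → ℕ)
    (hv0 : ∀ i : Fin d, (i : ℕ) = 0 → v i = z)
    (hva : ∀ i : Fin d, ∀ hik : (i : ℕ) < k, (i : ℕ) ≠ 0 → v i = a ⟨(i : ℕ), hik⟩)
    (hvp : ∀ i : Fin d, ∀ hik : (i : ℕ) < k + h, ∀ hki : k ≤ (i : ℕ),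
      v i = z / p ⟨(i : ℕ) - k, by omega⟩)
    (hvz : ∀ i : Fin d, k + h ≤ (i : ℕ) → v i = 0)
    -- the generators of `P(d) = P^z + [0,2e_{d(z)+1}] + … + [0,2e_d]`
    (g : Fin d → Fin d → ℝ)
    (hg0 : ∀ j : Fin d, (j : ℕ) = 0 → g j = fun i => (v i : ℝ))
    (hg1 : ∀ j : Fin d, (j : ℕ) ≠ 0 → (j : ℕ) < k + h → g j = Pi.single j 1)
    (hg2 : ∀ j : Fin d, k + h ≤ (j : ℕ) → g j = Pi.single j 2)
    (P : Set (Fin d → ℝ))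
    (hP : P = ∑ j : Fin d, segment ℝ (0 : Fin d → ℝ) (g j)) :
    ∀ w ∈ interior P, IsLatticePoint w → ca P w = (wLR d : ℝ) - 1 := by
  intro w hw hwlat
  choose W hW using hwlat
  have hz2 : 2 ≤ z := two_le_of_generators hd hk hh hv0 hg0 hg2
  have hk0 : 0 < k := by have := Nat.totient_pos.2 (by omega : 0 < z); omega
  obtain ⟨T, hPT, hT⟩ := exists_linearEquiv_parallelepiped_eq_image
    (generators_eq_update hd hg0 hg1 hg2) (by simpa [hv0] using (by omega : z ≠ 0))
    (fun j _ => by split_ifs <;> norm_num)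
  rw [hP, ← parallelepiped_eq_sum_segment, hPT] at hw ⊢
  rw [interior_image_Icc_zero_one] at hw
  obtain ⟨τ, hτ, rfl⟩ := hw
  rw [ca_image_linearEquiv, ← hz]
  refine ca_Icc_of_lattice_image hz2 (hv0 _ rfl) (fun j hj => ?_) (fun b hb1 hb2 hbz => ?_)
    (fun q hq => ?_) (fun j => hτ j (mem_univ j)) (fun j => (hW j).symm.trans (hT τ j))
  · by_cases hjk : (j : ℕ) < k + h
    · exact Or.inl (if_pos hjk)
    · exact Or.inr ⟨if_neg hjk, hvz j (by omega)⟩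
  · obtain ⟨j, hj0, hjk, hvj⟩ := exists_index_of_coprime (by omega) ha haran hva hb1 hb2 hbz
    exact ⟨j, Fin.ne_of_val_ne hj0, if_pos (by omega), hvj⟩
  · obtain ⟨j, hkj, hjk, hvj⟩ := exists_index_of_mem_primeFactors hD hpran hvp hq
    exact ⟨j, Fin.ne_of_val_ne (show (j : ℕ) ≠ 0 by omega), if_pos hjk, hvj⟩
end

section
/- Let n ∈ ℤ^d_{>0} be a velocity vector and let Z_n := [0,e_1] + ... + [0,e_d] + [0,n] be the lonely runner zonotope. Then the total number of lattice points of Z_n satisfies #(Z_n ∩ ℤ^d) = 2^d + Σ_ℓ φ(ℓ)·(2^{#J_ℓ} − 1), where the sum runs over all positive integers ℓ that divide n_j for at least one j ∈ {1,...,d}, J_ℓ := {j ∈ {1,...,d} : ℓ divides n_j}, and φ is Euler's totient function. -/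
open Pointwise

open Finset

/-!
An integer point `z` lies in `Z_n` iff `s • n ≤ z ≤ s • n + 1` coordinatewise for some
`s ∈ [0, 1]`. The points admitting `s = 0` are the `2 ^ d` vertices of the unit cube. Any other
point has a least admissible `s > 0`, namely `q = max_i (z_i - 1) / n_i`; writing `q = a / ℓ` in
lowest terms, the maximum is attained on a nonempty set `S` of indices with `ℓ ∣ n_j`, and then
`z_i = ⌈q n_i⌉ + [i ∈ S]`. Conversely each such triple `(ℓ, a, S)` with `0 < a ≤ ℓ` yields a point
of `Z_n`, and distinct triples yield distinct points (`q` and `S` can be read off the point), so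
these points number `∑_ℓ φ(ℓ) (2 ^ #J_ℓ - 1)`.
-/

theorem segment_zero_single_eq_image {ι : Type*} [DecidableEq ι] (i : ι) :
    segment ℝ (0 : ι → ℝ) (Pi.single i 1) = Pi.single i '' Set.Icc 0 1 := by
  rw [segment_eq_image']
  congr! 1 with t
  ext j
  simp [Pi.single_apply]

theorem sum_segment_single_eq_Icc {ι : Type*} [Fintype ι] [DecidableEq ι] :
    ∑ i, segment ℝ (0 : ι → ℝ) (Pi.single i 1) = Set.Icc 0 1 := by
  ext x
  simp only [Set.mem_fintype_sum, segment_zero_single_eq_image]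
  constructor
  · rintro ⟨g, hg, rfl⟩
    choose t ht hgt using hg
    simp only [← hgt, univ_sum_single]
    exact ⟨fun i => (ht i).1, fun i => (ht i).2⟩
  · intro hx
    exact ⟨fun i => Pi.single i (x i), fun i => ⟨x i, ⟨hx.1 i, hx.2 i⟩, rfl⟩, univ_sum_single x⟩

theorem mem_Icc_add_segment_iff {ι : Type*} {v x : ι → ℝ} :
    x ∈ Set.Icc 0 1 + segment ℝ 0 v ↔
      ∃ s ∈ Set.Icc (0 : ℝ) 1, ∀ i, s * v i ≤ x i ∧ x i ≤ s * v i + 1 := by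
  simp only [Set.mem_add, segment_eq_image', Set.mem_image, sub_zero, zero_add]
  constructor
  · rintro ⟨c, hc, _, ⟨s, hs, rfl⟩, rfl⟩
    refine ⟨s, hs, fun i => ?_⟩
    have := hc.1 i
    have := hc.2 i
    simp only [Pi.add_apply, Pi.smul_apply, smul_eq_mul, Pi.zero_apply, Pi.one_apply] at *
    constructor <;> linarith
  · rintro ⟨s, hs, hx⟩
    refine ⟨x - s • v, ⟨fun i => ?_, fun i => ?_⟩, _, ⟨s, hs, rfl⟩, sub_add_cancel x _⟩ <;>
      simp only [Pi.sub_apply, Pi.smul_apply, smul_eq_mul, Pi.zero_apply, Pi.one_apply] <;>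
      linarith [hx i]

def zonotopeIntPoints {ι : Type*} (n : ι → ℤ) : Set (ι → ℤ) :=
  {z | ∃ s ∈ Set.Icc (0 : ℝ) 1, ∀ i, s * n i ≤ z i ∧ (z i : ℝ) ≤ s * n i + 1}

theorem setOf_mem_Icc_add_segment_isLatticePoint {d : ℕ} (n : Fin d → ℤ) :
    {x | x ∈ Set.Icc 0 1 + segment ℝ 0 (fun i => (n i : ℝ)) ∧ IsLatticePoint x} =
      (fun z i => (z i : ℝ)) '' zonotopeIntPoints n := by
  ext x
  simp only [Set.mem_ofPred_eq, Set.mem_image, mem_Icc_add_segment_iff]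
  constructor
  · rintro ⟨hx, hlat⟩
    choose z hz using hlat
    obtain rfl : x = fun i => (z i : ℝ) := funext hz
    exact ⟨z, hx, rfl⟩
  · rintro ⟨z, hz, rfl⟩
    exact ⟨hz, fun i => ⟨z i, rfl⟩⟩

theorem Rat.den_dvd_of_mul_eq_intCast {r : ℚ} {m k : ℤ} (hm : m ≠ 0) (h : r * m = k) :
    (r.den : ℤ) ∣ m := by
  have : r = k / m := by rw [← h]; field_simp
  rw [this, ← Rat.divInt_eq_div]
  exact Rat.den_dvd k m

section RunnerPoint

variable {ι : Type*} [DecidableEq ι] {n : ι → ℤ}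

noncomputable def runnerPoint (n : ι → ℤ) (q : ℝ) (S : Finset ι) : ι → ℤ :=
  fun i => ⌈q * n i⌉ + if i ∈ S then 1 else 0

theorem runnerPoint_bounds {q : ℝ} {S : Finset ι} (hS : ∀ i ∈ S, ∃ k : ℤ, q * n i = k) (i : ι) :
    q * n i ≤ runnerPoint n q S i ∧ (runnerPoint n q S i : ℝ) ≤ q * n i + 1 := by
  unfold runnerPoint
  split_ifs with hi
  · obtain ⟨k, hk⟩ := hS i hi
    simp [hk]
  · simpa using ⟨Int.le_ceil _, (Int.ceil_lt_add_one _).le⟩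

theorem runnerPoint_eq_add_one_iff {q : ℝ} {S : Finset ι} (hS : ∀ i ∈ S, ∃ k : ℤ, q * n i = k)
    (i : ι) : (runnerPoint n q S i : ℝ) = q * n i + 1 ↔ i ∈ S := by
  unfold runnerPoint
  split_ifs with hi
  · obtain ⟨k, hk⟩ := hS i hi
    simp [hk, hi]
  · simpa [hi] using (Int.ceil_lt_add_one _).ne

theorem eq_runnerPoint [Fintype ι] {q : ℝ} {z : ι → ℤ}
    (hz : ∀ i, q * n i ≤ z i ∧ (z i : ℝ) ≤ q * n i + 1) :
    z = runnerPoint n q {i | (z i : ℝ) = q * n i + 1} := by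
  funext i
  unfold runnerPoint
  split_ifs with hi
  · have hq : q * n i = ((z i - 1 : ℤ) : ℝ) := by
      push_cast
      linarith [(mem_filter.1 hi).2]
    rw [hq, Int.ceil_intCast]
    ring
  · have hne : (z i : ℝ) ≠ q * n i + 1 := by simpa using hi
    rw [add_zero, eq_comm, Int.ceil_eq_iff]
    exact ⟨by grind, (hz i).1⟩

theorem slope_le_of_runnerPoint_eq (hpos : ∀ i, 0 < n i) {q q' : ℝ} {S S' : Finset ι}
    (hS : ∀ i ∈ S, ∃ k : ℤ, q * n i = k) (hS' : ∀ i ∈ S', ∃ k : ℤ, q' * n i = k)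
    (hne : S.Nonempty) (h : runnerPoint n q S = runnerPoint n q' S') : q ≤ q' := by
  obtain ⟨j, hj⟩ := hne
  have hnj : (0 : ℝ) < n j := by exact_mod_cast hpos j
  have hle := (runnerPoint_bounds hS' j).2
  rw [← h, (runnerPoint_eq_add_one_iff hS j).2 hj] at hle
  exact le_of_mul_le_mul_right (by linarith) hnj

theorem runnerPoint_injective_of_pos (hpos : ∀ i, 0 < n i) {q q' : ℝ} {S S' : Finset ι}
    (hS : ∀ i ∈ S, ∃ k : ℤ, q * n i = k) (hS' : ∀ i ∈ S', ∃ k : ℤ, q' * n i = k)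
    (hne : S.Nonempty) (hne' : S'.Nonempty) (h : runnerPoint n q S = runnerPoint n q' S') :
    q = q' ∧ S = S' := by
  obtain rfl : q = q' := le_antisymm (slope_le_of_runnerPoint_eq hpos hS hS' hne h)
    (slope_le_of_runnerPoint_eq hpos hS' hS hne' h.symm)
  refine ⟨rfl, Finset.ext fun i => ?_⟩
  rw [← runnerPoint_eq_add_one_iff hS, ← runnerPoint_eq_add_one_iff hS', h]

end RunnerPoint

section Counting

variable {ι : Type*} [Fintype ι] [DecidableEq ι] {n : ι → ℤ}

/-- The triples `⟨ℓ, a, S⟩`: the slope `a / ℓ` in lowest terms and the nonempty set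
`S ⊆ J_ℓ` of coordinates where the upper constraint is tight. -/
def runnerParams (n : ι → ℤ) : Finset (Σ _ : ℕ, ℕ × Finset ι) :=
  (univ.biUnion fun j => (n j).toNat.divisors).sigma fun ℓ =>
    {a ∈ Ico 1 (1 + ℓ) | ℓ.Coprime a} ×ˢ (univ.filter fun j => (ℓ : ℤ) ∣ n j).powerset.erase ∅

noncomputable def runnerPoints (n : ι → ℤ) : Finset (ι → ℤ) :=
  (runnerParams n).image fun p => runnerPoint n (p.2.1 / p.1) p.2.2

theorem card_runnerParams :
    #(runnerParams n) = ∑ ℓ ∈ univ.biUnion (fun j => (n j).toNat.divisors),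
      ℓ.totient * (2 ^ #(univ.filter fun j => (ℓ : ℤ) ∣ n j) - 1) := by
  simp only [runnerParams, card_sigma, card_product, Nat.filter_coprime_Ico_eq_totient,
    card_erase_of_mem (empty_mem_powerset _), card_powerset]

theorem mem_runnerParams (hpos : ∀ i, 0 < n i) {ℓ a : ℕ} {S : Finset ι} :
    ⟨ℓ, a, S⟩ ∈ runnerParams n ↔
      a ∈ Ico 1 (1 + ℓ) ∧ ℓ.Coprime a ∧ S.Nonempty ∧ ∀ i ∈ S, (ℓ : ℤ) ∣ n i := by
  simp only [runnerParams, mem_sigma, mem_product, mem_filter, mem_erase, mem_powerset,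
    mem_biUnion, mem_univ, true_and, Nat.mem_divisors, ← nonempty_iff_ne_empty]
  constructor
  · rintro ⟨-, ⟨ha, hcop⟩, hne, hS⟩
    exact ⟨ha, hcop, hne, fun i hi => (mem_filter.1 (hS hi)).2⟩
  · rintro ⟨ha, hcop, ⟨j, hj⟩, hS⟩
    refine ⟨⟨j, ?_, by have := hpos j; omega⟩, ⟨ha, hcop⟩, ⟨j, hj⟩,
      fun i hi => mem_filter.2 ⟨mem_univ _, hS i hi⟩⟩
    rw [← Int.natCast_dvd_natCast, Int.toNat_of_nonneg (hpos j).le]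
    exact hS j hj

theorem slope_mul_eq_intCast_of_mem_runnerParams (hpos : ∀ i, 0 < n i) {ℓ a : ℕ}
    {S : Finset ι} (hp : ⟨ℓ, a, S⟩ ∈ runnerParams n) :
    ∀ i ∈ S, ∃ k : ℤ, (a / ℓ : ℝ) * n i = k := by
  obtain ⟨ha, -, -, hS⟩ := (mem_runnerParams hpos).1 hp
  intro i hi
  obtain ⟨m, hm⟩ := hS i hi
  have hℓ : (ℓ : ℝ) ≠ 0 := by
    obtain ⟨h1, h2⟩ := mem_Ico.1 ha
    exact_mod_cast (by omega : ℓ ≠ 0)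
  exact ⟨a * m, by rw [hm]; push_cast; field_simp⟩

theorem injOn_runnerParams (hpos : ∀ i, 0 < n i) :
    Set.InjOn (fun p : Σ _ : ℕ, ℕ × Finset ι => runnerPoint n (p.2.1 / p.1) p.2.2)
      (runnerParams n) := by
  rintro ⟨ℓ, a, S⟩ hp ⟨ℓ', a', S'⟩ hp' h
  obtain ⟨ha, hcop, hne, -⟩ := (mem_runnerParams hpos).1 hp
  obtain ⟨ha', hcop', hne', -⟩ := (mem_runnerParams hpos).1 hp'
  obtain ⟨hq, rfl⟩ := runnerPoint_injective_of_pos hpos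
    (slope_mul_eq_intCast_of_mem_runnerParams hpos hp)
    (slope_mul_eq_intCast_of_mem_runnerParams hpos hp') hne hne' h
  obtain ⟨h1, h2⟩ := mem_Ico.1 ha
  obtain ⟨h1', h2'⟩ := mem_Ico.1 ha'
  have hq' : ((a : ℤ) : ℚ) / (ℓ : ℤ) = ((a' : ℤ) : ℚ) / (ℓ' : ℤ) := by
    have : ((a / ℓ : ℚ) : ℝ) = ((a' / ℓ' : ℚ) : ℝ) := by push_cast; exact hq
    simpa only [Int.cast_natCast] using Rat.cast_injective this
  obtain ⟨ha_eq, hℓ_eq⟩ := Rat.div_int_inj (by omega) (by omega)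
    (by simpa using hcop.symm) (by simpa using hcop'.symm) hq'
  obtain rfl : a = a' := by exact_mod_cast ha_eq
  obtain rfl : ℓ = ℓ' := by exact_mod_cast hℓ_eq
  rfl

theorem exists_one_lt_of_mem_runnerPoints (hpos : ∀ i, 0 < n i) {z : ι → ℤ}
    (hz : z ∈ runnerPoints n) : ∃ j, 1 < z j := by
  obtain ⟨⟨ℓ, a, S⟩, hp, rfl⟩ := mem_image.1 hz
  obtain ⟨ha, -, ⟨j, hj⟩, -⟩ := (mem_runnerParams hpos).1 hp
  have htight :=
    (runnerPoint_eq_add_one_iff (slope_mul_eq_intCast_of_mem_runnerParams hpos hp) j).2 hj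
  have hslope : (0 : ℝ) < a / ℓ * n j := by
    obtain ⟨h1, h2⟩ := mem_Ico.1 ha
    have : (0 : ℝ) < a := by exact_mod_cast h1
    have : (0 : ℝ) < ℓ := by exact_mod_cast (by omega : 0 < ℓ)
    have : (0 : ℝ) < n j := by exact_mod_cast hpos j
    positivity
  exact ⟨j, by exact_mod_cast (by linarith : (1 : ℝ) < runnerPoint n (a / ℓ) S j)⟩

theorem exists_rat_slope (hpos : ∀ i, 0 < n i) {z : ι → ℤ}
    (hz : z ∈ zonotopeIntPoints n) (hcorner : z ∉ Fintype.piFinset fun _ => {0, 1}) :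
    ∃ r : ℚ, 0 < r ∧ r ≤ 1 ∧ (∃ j, (z j : ℝ) = r * n j + 1) ∧
      ∀ i, (r : ℝ) * n i ≤ z i ∧ (z i : ℝ) ≤ r * n i + 1 := by
  obtain ⟨s, ⟨hs0, hs1⟩, hb⟩ := hz
  have hnR : ∀ i, (0 : ℝ) < n i := fun i => by exact_mod_cast hpos i
  obtain ⟨i₀, hi₀⟩ : ∃ i₀, 2 ≤ z i₀ := by
    have hz0 : ∀ i, 0 ≤ z i := fun i => by
      have : (0 : ℝ) ≤ z i := (mul_nonneg hs0 (hnR i).le).trans (hb i).1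
      exact_mod_cast this
    simp only [Fintype.mem_piFinset, mem_insert, mem_singleton, not_forall] at hcorner
    obtain ⟨i₀, hi₀⟩ := hcorner
    exact ⟨i₀, by have := hz0 i₀; omega⟩
  obtain ⟨j, -, hj⟩ := exists_max_image univ (fun i => ((z i : ℝ) - 1) / n i) ⟨i₀, mem_univ _⟩
  set r : ℚ := (z j - 1 : ℤ) / n j with hr
  have hrR : (r : ℝ) = ((z j : ℝ) - 1) / n j := by push_cast [hr]; rfl
  have hmax : ∀ i, (z i : ℝ) ≤ r * n i + 1 := fun i => by
    have := hj i (mem_univ _)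
    rw [← hrR, div_le_iff₀ (hnR i)] at this
    linarith
  have hrs : (r : ℝ) ≤ s := by
    rw [hrR, div_le_iff₀ (hnR j)]
    linarith [(hb j).2]
  have hr0 : (0 : ℝ) < r := by
    have h2 : (2 : ℝ) ≤ z i₀ := by exact_mod_cast hi₀
    have := hj i₀ (mem_univ _)
    rw [← hrR] at this
    exact (div_pos (by linarith) (hnR i₀)).trans_le this
  refine ⟨r, by exact_mod_cast hr0, by exact_mod_cast hrs.trans hs1, ⟨j, ?_⟩, fun i =>
    ⟨(mul_le_mul_of_nonneg_right hrs (hnR i).le).trans (hb i).1, hmax i⟩⟩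
  rw [hrR, div_mul_cancel₀ _ (hnR j).ne']
  ring

theorem mem_runnerPoints_of_rat_slope (hpos : ∀ i, 0 < n i) {r : ℚ} (hr0 : 0 < r) (hr1 : r ≤ 1)
    {z : ι → ℤ} (hz : ∀ i, (r : ℝ) * n i ≤ z i ∧ (z i : ℝ) ≤ r * n i + 1)
    {j : ι} (hj : (z j : ℝ) = r * n j + 1) : z ∈ runnerPoints n := by
  have hnum : (r.num.natAbs : ℤ) = r.num := Int.natAbs_of_nonneg (Rat.num_nonneg.2 hr0.le)
  have hr : ((r.num.natAbs : ℕ) : ℝ) / (r.den : ℕ) = r := by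
    rw [← Int.cast_natCast, hnum]
    exact_mod_cast Rat.num_div_den r
  refine mem_image.2 ⟨⟨r.den, r.num.natAbs, univ.filter fun i => (z i : ℝ) = r * n i + 1⟩, ?_, ?_⟩
  · refine (mem_runnerParams hpos).2 ⟨mem_Ico.2 ⟨?_, ?_⟩, r.reduced.symm,
      ⟨j, mem_filter.2 ⟨mem_univ _, hj⟩⟩,
      fun i hi => Rat.den_dvd_of_mul_eq_intCast (hpos i).ne' (k := z i - 1) ?_⟩
    · have := Rat.num_pos.2 hr0
      omega
    · have := Rat.num_le_denom_iff.2 hr1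
      omega
    · have := (mem_filter.1 hi).2
      exact_mod_cast (by push_cast; linarith : ((r * n i : ℚ) : ℝ) = ((z i - 1 : ℤ) : ℝ))
  · dsimp only
    rw [hr]
    exact (eq_runnerPoint hz).symm

theorem zonotopeIntPoints_eq (hpos : ∀ i, 0 < n i) :
    zonotopeIntPoints n = ↑((Fintype.piFinset fun _ => {0, 1}) ∪ runnerPoints n) := by
  ext z
  rw [coe_union, Set.mem_union, mem_coe, mem_coe]
  constructor
  · intro hz
    by_cases hcorner : z ∈ Fintype.piFinset fun _ => {0, 1}
    · exact .inl hcorner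
    · obtain ⟨r, hr0, hr1, ⟨j, hj⟩, hb⟩ := exists_rat_slope hpos hz hcorner
      exact .inr (mem_runnerPoints_of_rat_slope hpos hr0 hr1 hb hj)
  · rintro (hz | hz)
    · refine ⟨0, ⟨le_rfl, zero_le_one⟩, fun i => ?_⟩
      rcases mem_insert.1 (Fintype.mem_piFinset.1 hz i) with h | h <;> simp_all
    · obtain ⟨⟨ℓ, a, S⟩, hp, rfl⟩ := mem_image.1 hz
      obtain ⟨ha, -, -, -⟩ := (mem_runnerParams hpos).1 hp
      obtain ⟨-, haℓ⟩ := mem_Ico.1 ha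
      refine ⟨a / ℓ, ⟨by positivity, div_le_one_of_le₀ (by exact_mod_cast (by omega : a ≤ ℓ))
        (by positivity)⟩, runnerPoint_bounds (slope_mul_eq_intCast_of_mem_runnerParams hpos hp)⟩

theorem ncard_zonotopeIntPoints (hpos : ∀ i, 0 < n i) :
    (zonotopeIntPoints n).ncard =
      2 ^ Fintype.card ι + ∑ ℓ ∈ univ.biUnion (fun j => (n j).toNat.divisors),
        ℓ.totient * (2 ^ #(univ.filter fun j => (ℓ : ℤ) ∣ n j) - 1) := by
  have hdisj : Disjoint (Fintype.piFinset fun _ : ι => ({0, 1} : Finset ℤ)) (runnerPoints n) := by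
    refine disjoint_left.2 fun z hcorner hz => ?_
    obtain ⟨j, hj⟩ := exists_one_lt_of_mem_runnerPoints hpos hz
    have := Fintype.mem_piFinset.1 hcorner j
    simp only [mem_insert, mem_singleton] at this
    omega
  rw [zonotopeIntPoints_eq hpos, Set.ncard_coe_finset, card_union_of_disjoint hdisj,
    runnerPoints, card_image_of_injOn (injOn_runnerParams hpos), card_runnerParams,
    Fintype.card_piFinset]
  simp

end Counting

theorem num_lattice_points_lonely_runner_zonotope_general
    {d : ℕ} (n : Fin d → ℤ) (hpos : ∀ i, 0 < n i)
    (Z : Set (Fin d → ℝ))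
    (hZ : Z = (∑ j : Fin d, segment ℝ (0 : Fin d → ℝ) (Pi.single j 1)) +
      segment ℝ (0 : Fin d → ℝ) (fun i => (n i : ℝ))) :
    {x | x ∈ Z ∧ IsLatticePoint x}.ncard =
      2 ^ d + ∑ ℓ ∈ Finset.univ.biUnion (fun j : Fin d => (n j).toNat.divisors),
        ℓ.totient * (2 ^ (Finset.univ.filter fun j : Fin d => (ℓ : ℤ) ∣ n j).card - 1) := by
  have hcast : Function.Injective fun (z : Fin d → ℤ) (i : Fin d) => (z i : ℝ) :=
    Int.cast_injective.comp_left
  rw [hZ, sum_segment_single_eq_Icc, setOf_mem_Icc_add_segment_isLatticePoint,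
    Set.ncard_image_of_injective _ hcast, ncard_zonotopeIntPoints hpos, Fintype.card_fin]

theorem num_lattice_points_lonely_runner_zonotope
    {d : ℕ} (hd : 2 ≤ d) (n : Fin d → ℤ) (hpos : ∀ i, 0 < n i)
    (hdist : Function.Injective n) (hgcd : Finset.univ.gcd n = 1)
    (Z : Set (Fin d → ℝ))
    (hZ : Z = (∑ j : Fin d, segment ℝ (0 : Fin d → ℝ) (Pi.single j 1)) +
      segment ℝ (0 : Fin d → ℝ) (fun i => (n i : ℝ))) :
    {x | x ∈ Z ∧ IsLatticePoint x}.ncard =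
      2 ^ d + ∑ ℓ ∈ Finset.univ.biUnion (fun j : Fin d => (n j).toNat.divisors),
        ℓ.totient * (2 ^ (Finset.univ.filter fun j : Fin d => (ℓ : ℤ) ∣ n j).card - 1) :=
  num_lattice_points_lonely_runner_zonotope_general n hpos Z hZ
end
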